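/- Let n ≥ 2 and let Δ : M_n(ℂ) → M_n(ℂ) be a 2-local inner derivation. For each ordered pair (i, j) with i ≠ j, fix a matrix a(ij) ∈ M_n(ℂ) such that Δ(e_{ij}) = a(ij)·e_{ij} − e_{ij}·a(ij), and define the matrix A ∈ M_n(ℂ) by A_{ij} = (a(ji))_{ij} for i ≠ j and A_{ii} = 0 for all i. Then for every pair of distinct indices i, j: Δ(e_{ij}) = A·e_{ij} − e_{ij}·A + (a(ij))_{ii}·e_{ij} − e_{ij}·(a(ij))_{jj}. -/

import Mathlib

/-! The commutator `a e_{ij} - e_{ij} a` only sees column `i` and row `j` of `a`: off the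
diagonal its column `j` is column `i` of `a`, its row `i` is minus row `j` of `a`, and its
`(i, j)` entry is `a_{ii} - a_{jj}`. Applying 2-locality to the pairs `(e_{ij}, e_{ik})` and
`(e_{ij}, e_{lj})` shows that the off-diagonal entries of column `i` and row `j` of `a(ij)` are
those of `A`, so only the diagonal correction remains. -/

namespace Matrix

variable {ι R : Type*} [Fintype ι] [DecidableEq ι] [Ring R]

theorem mul_single_sub_single_mul_apply (a : Matrix ι ι R) (i j k l : ι) :
    (a * single i j 1 - single i j 1 * a : Matrix ι ι R) k l =
      (if l = j then a k i else 0) - (if k = i then a j l else 0) := by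
  rw [sub_apply]
  congr 1
  · split_ifs with hl
    · rw [hl, mul_single_apply_same, mul_one]
    · exact mul_single_apply_of_ne _ _ _ _ _ hl a
  · split_ifs with hk
    · rw [hk, single_mul_apply_same, one_mul]
    · exact single_mul_apply_of_ne _ _ _ _ _ hk a

theorem mul_single_sub_single_mul_apply_col {i k : ι} (hki : k ≠ i) (j : ι)
    (a : Matrix ι ι R) : (a * single i j 1 - single i j 1 * a : Matrix ι ι R) k j = a k i := by
  simp [hki]

theorem mul_single_sub_single_mul_apply_row {j l : ι} (hlj : l ≠ j) (i : ι)
    (a : Matrix ι ι R) : (a * single i j 1 - single i j 1 * a : Matrix ι ι R) i l = -a j l := by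
  simp [hlj]

theorem mul_single_sub_single_mul_eq_of_col_row {a b : Matrix ι ι R} {i j : ι}
    (hcol : ∀ k, k ≠ i → b k i = a k i) (hrow : ∀ l, l ≠ j → b j l = a j l) :
    a * single i j 1 - single i j 1 * a =
      b * single i j 1 - single i j 1 * b + (a i i - b i i) • single i j 1 -
        (a j j - b j j) • single i j 1 := by
  ext k l
  rw [mul_single_sub_single_mul_apply, sub_apply, add_apply, mul_single_sub_single_mul_apply]
  simp only [smul_apply, single_apply, smul_eq_mul, mul_ite, mul_one, mul_zero]
  by_cases hk : k = i <;> by_cases hl : l = j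
  · subst hk hl
    simp only [if_true, and_self]
    abel
  · simp [hk, hl, Ne.symm hl, hrow l hl]
  · simp [hk, hl, Ne.symm hk, hcol k hk]
  · simp [hk, hl, Ne.symm hk]

end Matrix

def IsTwoLocalInnerDerivation {A : Type*} [Ring A] (Δ : A → A) : Prop :=
  ∀ x y : A, ∃ a : A, Δ x = a * x - x * a ∧ Δ y = a * y - y * a

namespace IsTwoLocalInnerDerivation

open Matrix

variable {ι R : Type*} [Fintype ι] [DecidableEq ι] [Ring R]
  {Δ : Matrix ι ι R → Matrix ι ι R}

theorem implementer_apply_col_eq (hΔ : IsTwoLocalInnerDerivation Δ) {a c : Matrix ι ι R}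
    {i j k : ι} (hki : k ≠ i)
    (ha : Δ (single i j 1) = a * single i j 1 - single i j 1 * a)
    (hc : Δ (single i k 1) = c * single i k 1 - single i k 1 * c) :
    a k i = c k i := by
  obtain ⟨b, hbj, hbk⟩ := hΔ (single i j 1) (single i k 1)
  calc a k i = Δ (single i j 1) k j := by rw [ha, mul_single_sub_single_mul_apply_col hki]
    _ = b k i := by rw [hbj, mul_single_sub_single_mul_apply_col hki]
    _ = Δ (single i k 1) k k := by rw [hbk, mul_single_sub_single_mul_apply_col hki]
    _ = c k i := by rw [hc, mul_single_sub_single_mul_apply_col hki]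

theorem implementer_apply_row_eq (hΔ : IsTwoLocalInnerDerivation Δ) {a c : Matrix ι ι R}
    {i j l : ι} (hlj : l ≠ j)
    (ha : Δ (single i j 1) = a * single i j 1 - single i j 1 * a)
    (hc : Δ (single l j 1) = c * single l j 1 - single l j 1 * c) :
    a j l = c j l := by
  obtain ⟨b, hbi, hbl⟩ := hΔ (single i j 1) (single l j 1)
  rw [← neg_inj]
  calc -a j l = Δ (single i j 1) i l := by rw [ha, mul_single_sub_single_mul_apply_row hlj]
    _ = -b j l := by rw [hbi, mul_single_sub_single_mul_apply_row hlj]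
    _ = Δ (single l j 1) l l := by rw [hbl, mul_single_sub_single_mul_apply_row hlj]
    _ = -c j l := by rw [hc, mul_single_sub_single_mul_apply_row hlj]

end IsTwoLocalInnerDerivation

theorem twoLocal_inner_derivation_matrix_units_general
    (n : ℕ)
    (Δ : Matrix (Fin n) (Fin n) ℂ → Matrix (Fin n) (Fin n) ℂ)
    (h2loc : ∀ x y : Matrix (Fin n) (Fin n) ℂ, ∃ a : Matrix (Fin n) (Fin n) ℂ,
      Δ x = a * x - x * a ∧ Δ y = a * y - y * a)
    (a : Fin n → Fin n → Matrix (Fin n) (Fin n) ℂ)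
    (ha : ∀ i j : Fin n, i ≠ j →
      Δ (Matrix.single i j (1 : ℂ)) =
        a i j * Matrix.single i j (1 : ℂ) -
          Matrix.single i j (1 : ℂ) * a i j)
    (A : Matrix (Fin n) (Fin n) ℂ)
    (hA : ∀ i j : Fin n, A i j = if i = j then 0 else a j i i j) :
    ∀ i j : Fin n, i ≠ j →
      Δ (Matrix.single i j (1 : ℂ)) =
        A * Matrix.single i j (1 : ℂ) -
          Matrix.single i j (1 : ℂ) * A +
        a i j i i • Matrix.single i j (1 : ℂ) -
        a i j j j • Matrix.single i j (1 : ℂ) := by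
  have hΔ : IsTwoLocalInnerDerivation Δ := h2loc
  intro i j hij
  have hcol : ∀ k, k ≠ i → A k i = a i j k i := fun k hki => by
    rw [hA, if_neg hki, hΔ.implementer_apply_col_eq hki (ha i j hij) (ha i k hki.symm)]
  have hrow : ∀ l, l ≠ j → A j l = a i j j l := fun l hlj => by
    rw [hA, if_neg (Ne.symm hlj), hΔ.implementer_apply_row_eq hlj (ha i j hij) (ha l j hlj)]
  rw [ha i j hij, Matrix.mul_single_sub_single_mul_eq_of_col_row hcol hrow, hA i i, hA j j]
  simp only [if_true, sub_zero]

/-- Lemma 2 of the paper for `Mₙ(ℂ)`: the value of a 2-local inner derivation at a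
matrix unit `e_{ij}` (`i ≠ j`) is implemented by the off-diagonal matrix `A`
gathered from the individual implementing elements, up to a diagonal correction.  -/
theorem twoLocal_inner_derivation_matrix_units
    (n : ℕ) (hn : 2 ≤ n)
    (Δ : Matrix (Fin n) (Fin n) ℂ → Matrix (Fin n) (Fin n) ℂ)
    (h2loc : ∀ x y : Matrix (Fin n) (Fin n) ℂ, ∃ a : Matrix (Fin n) (Fin n) ℂ,
      Δ x = a * x - x * a ∧ Δ y = a * y - y * a)
    (a : Fin n → Fin n → Matrix (Fin n) (Fin n) ℂ)
    (ha : ∀ i j : Fin n, i ≠ j →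
      Δ (Matrix.single i j (1 : ℂ)) =
        a i j * Matrix.single i j (1 : ℂ) -
          Matrix.single i j (1 : ℂ) * a i j)
    (A : Matrix (Fin n) (Fin n) ℂ)
    (hA : ∀ i j : Fin n, A i j = if i = j then 0 else a j i i j) :
    ∀ i j : Fin n, i ≠ j →
      Δ (Matrix.single i j (1 : ℂ)) =
        A * Matrix.single i j (1 : ℂ) -
          Matrix.single i j (1 : ℂ) * A +
        a i j i i • Matrix.single i j (1 : ℂ) -
        a i j j j • Matrix.single i j (1 : ℂ) :=
  twoLocal_inner_derivation_matrix_units_general n Δ h2loc a ha A hA
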